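/- Let S = B be the Boolean semifield and let w = Σ_{I∈𝓑} e_I ∈ ⋀^3 B^6 be the Plücker vector of the graphic matroid M(K_4), whose bases are 𝓑 = C([6],3) ∖ {{1,2,3},{1,4,5},{2,5,6},{3,4,6}}. Then ⋀^3 Q_w ≅ B is free of rank one; the images of x_I for I ∈ 𝓑 all equal the generator, and x_I = 0 for I ∈ {{1,2,3},{1,4,5},{2,5,6},{3,4,6}}. -/

import Mathlib

open Finset

/-- The tropical Plücker relations for a rank-`d` tensor `w ∈ ⋀^d S^n`. -/
def TropPluckerRel {S : Type*} [Semifield S] (n d : ℕ) (w : Finset (Fin n) → S) : Prop :=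
  ∀ A B : Finset (Fin n), A.card = d + 1 → B.card = d - 1 → ∀ p ∈ A \ B,
    ∑ i ∈ A \ B, w (A.erase i) * w (insert i B)
      = ∑ i ∈ (A \ B).erase p, w (A.erase i) * w (insert i B)

/-- The `S`-module congruence generated by a relation `r`: the smallest equivalence
relation containing `r` and compatible with addition and scalar multiplication. -/
inductive ModCongr (S : Type*) [Semiring S] {M : Type*} [AddCommMonoid M] [Module S M]
    (r : M → M → Prop) : M → M → Prop
  | of {x y} : r x y → ModCongr S r x y
  | refl (x) : ModCongr S r x x
  | symm {x y} : ModCongr S r x y → ModCongr S r y x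
  | trans {x y z} : ModCongr S r x y → ModCongr S r y z → ModCongr S r x z
  | add {x y x' y'} : ModCongr S r x y → ModCongr S r x' y' →
      ModCongr S r (x + x') (y + y')
  | smul (s : S) {x y} : ModCongr S r x y → ModCongr S r (s • x) (s • y)

/-- Index type for the standard basis of `⋀^d S^n`: `d`-element subsets of `[n]`. -/
abbrev WIdx (n d : ℕ) := {I : Finset (Fin n) // I.card = d}

/-- The element `x_B ∧ (∑_{i ∈ T} w_{J−i} x_i)` of `⋀^d (S^n)^∨` in coordinates:
its `K`-coordinate is `∑_{i ∈ T∖B, K = B+i} w_{J−i}`. -/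
def wedgeElt {S : Type*} [Semifield S] {n : ℕ} (d : ℕ) (w : Finset (Fin n) → S)
    (T J B : Finset (Fin n)) : WIdx n d → S :=
  fun K => ∑ i ∈ T \ B, if K.1 = insert i B then w (J.erase i) else 0

/-- The generating relations of the congruence presenting `⋀^d Q_w` as a quotient of
`⋀^d (S^n)^∨`: the bend relations of the circuit forms `α_J = ∑_{i∈J} w_{J−i} x_i`
(`J ∈ C([n],d+1)`), wedged with square-free monomials `x_B` of degree `d−1`. -/
def WedgeBendRel {S : Type*} [Semifield S] (n d : ℕ) (w : Finset (Fin n) → S) :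
    (WIdx n d → S) → (WIdx n d → S) → Prop :=
  fun p q => ∃ J B : Finset (Fin n), ∃ j ∈ J, J.card = d + 1 ∧ B.card = d - 1 ∧
    p = wedgeElt d w J J B ∧ q = wedgeElt d w (J.erase j) J B

/-- The basis vector `x_I` of `⋀^d (S^n)^∨` in coordinates. -/
def deltaVec (S : Type*) [Semifield S] (n d : ℕ) (I : Finset (Fin n)) : WIdx n d → S :=
  fun K => if K.1 = I then 1 else 0

/-!
Pairing with `w`, `m ↦ ∑_K w_K m_K`, is `S`-linear, and since `w` satisfies the tropical Plücker
relations it takes the same value on both sides of every wedged bend relation. For a `0/1`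
vector over an idempotent semifield these relations amount to symmetric basis exchange, which
`M(K_4)` satisfies. The pairing sends `x_{013}` to `1`, so distinct multiples of `x_{013}` stay
distinct.

Conversely, the bend relation of the circuit form of `J = B + i + k`, wedged with `x_B`, reads
`x_{B+i} + x_{B+k} = x_{B+k}` when `B + i` and `B + k` are both bases. So adjacent bases are
identified, and by basis exchange all of them are. When `B + k` is a basis but `B + i` is not, the
same relation reads `x_{B+i} = 0`, and this kills the four circuit-hyperplanes.
-/

namespace ModCongr

variable {S M N : Type*} [Semiring S] [AddCommMonoid M] [Module S M] [AddCommMonoid N]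
  [Module S N] {r : M → M → Prop}

theorem apply_eq (f : M →ₗ[S] N) (hf : ∀ x y, r x y → f x = f y) {x y : M}
    (h : ModCongr S r x y) : f x = f y := by
  induction h with
  | of hr => exact hf _ _ hr
  | refl => rfl
  | symm _ ih => exact ih.symm
  | trans _ _ ih₁ ih₂ => exact ih₁.trans ih₂
  | add _ _ ih₁ ih₂ => rw [map_add, map_add, ih₁, ih₂]
  | smul s _ ih => rw [map_smul, map_smul, ih]

theorem sum {ι : Type*} (s : Finset ι) {f g : ι → M} (h : ∀ i ∈ s, ModCongr S r (f i) (g i)) :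
    ModCongr S r (∑ i ∈ s, f i) (∑ i ∈ s, g i) := by
  classical
  induction s using Finset.induction_on with
  | empty => exact .refl 0
  | insert a s ha ih =>
    rw [sum_insert ha, sum_insert ha]
    exact .add (h a (mem_insert_self a s)) (ih fun i hi => h i (mem_insert_of_mem hi))

end ModCongr

theorem natCast_eq_one_of_add_self {S : Type*} [Semiring S] (hid : ∀ s : S, s + s = s) {k : ℕ}
    (hk : k ≠ 0) : (k : S) = 1 := by
  induction k with
  | zero => exact absurd rfl hk
  | succ k ih =>
    rcases eq_or_ne k 0 with rfl | hk'
    · simp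
    · rw [Nat.cast_succ, ih hk', hid]

theorem sum_boole_eq_of_exists_iff {S ι : Type*} [Semiring S] (hid : ∀ s : S, s + s = s)
    {s t : Finset ι} {p : ι → Prop} [DecidablePred p] (h : (∃ i ∈ s, p i) ↔ ∃ i ∈ t, p i) :
    (∑ i ∈ s, if p i then (1 : S) else 0) = ∑ i ∈ t, if p i then (1 : S) else 0 := by
  simp only [sum_boole]
  by_cases hs : ∃ i ∈ s, p i
  · obtain ⟨i, hi, hpi⟩ := hs
    obtain ⟨j, hj, hpj⟩ := h.1 ⟨i, hi, hpi⟩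
    rw [natCast_eq_one_of_add_self hid (card_ne_zero_of_mem (mem_filter.2 ⟨hi, hpi⟩)),
      natCast_eq_one_of_add_self hid (card_ne_zero_of_mem (mem_filter.2 ⟨hj, hpj⟩))]
  · have ht : ¬∃ i ∈ t, p i := h.not.1 hs
    simp_all

section Wedge

variable {S : Type*} [Semifield S] {n d : ℕ}

theorem eq_sum_smul_deltaVec (m : WIdx n d → S) : m = ∑ K, m K • deltaVec S n d K.1 := by
  conv_lhs => rw [pi_eq_sum_univ m]
  refine sum_congr rfl fun K _ => congrArg (m K • ·) (funext fun K' => ?_)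
  simp only [deltaVec, Subtype.ext_iff, eq_comm]

theorem wedgeElt_eq_sum (w : Finset (Fin n) → S) (T J B : Finset (Fin n)) :
    wedgeElt d w T J B = ∑ i ∈ T \ B, w (J.erase i) • deltaVec S n d (insert i B) := by
  ext K
  simp [wedgeElt, deltaVec, Finset.sum_apply]

def pluckerPairing (w : Finset (Fin n) → S) : (WIdx n d → S) →ₗ[S] S :=
  ∑ K, w K.1 • LinearMap.proj K

theorem pluckerPairing_apply (w : Finset (Fin n) → S) (m : WIdx n d → S) :
    pluckerPairing w m = ∑ K, w K.1 * m K := by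
  simp [pluckerPairing]

theorem pluckerPairing_deltaVec (w : Finset (Fin n) → S) {I : Finset (Fin n)} (hI : I.card = d) :
    pluckerPairing w (deltaVec S n d I) = w I := by
  rw [pluckerPairing_apply, Finset.sum_eq_single ⟨I, hI⟩]
  · simp [deltaVec]
  · intro K _ hK
    rw [deltaVec, if_neg fun h => hK (Subtype.ext h), mul_zero]
  · simp

theorem pluckerPairing_wedgeElt (w : Finset (Fin n) → S) (hd : 0 < d) {T J B : Finset (Fin n)}
    (hB : B.card = d - 1) :
    pluckerPairing w (wedgeElt d w T J B) = ∑ i ∈ T \ B, w (J.erase i) * w (insert i B) := by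
  rw [wedgeElt_eq_sum, map_sum]
  refine sum_congr rfl fun i hi => ?_
  rw [map_smul, pluckerPairing_deltaVec, smul_eq_mul]
  rw [card_insert_of_notMem (mem_sdiff.1 hi).2]
  omega

theorem pluckerPairing_eq_of_wedgeBendRel {w : Finset (Fin n) → S} (hw : TropPluckerRel n d w)
    (hd : 0 < d) {p q : WIdx n d → S} (h : WedgeBendRel n d w p q) :
    pluckerPairing w p = pluckerPairing w q := by
  obtain ⟨J, B, j, hj, hJ, hB, rfl, rfl⟩ := h
  rw [pluckerPairing_wedgeElt w hd hB, pluckerPairing_wedgeElt w hd hB, erase_sdiff_comm]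
  by_cases hjB : j ∈ B
  · rw [erase_eq_of_notMem fun h => (mem_sdiff.1 h).2 hjB]
  · exact hw J B hJ hB j (mem_sdiff.2 ⟨hj, hjB⟩)

theorem ModCongr.pluckerPairing_eq {w : Finset (Fin n) → S} (hw : TropPluckerRel n d w)
    (hd : 0 < d) {p q : WIdx n d → S} (h : ModCongr S (WedgeBendRel n d w) p q) :
    pluckerPairing w p = pluckerPairing w q :=
  h.apply_eq _ fun _ _ => pluckerPairing_eq_of_wedgeBendRel hw hd

theorem eq_of_modCongr_smul_deltaVec {w : Finset (Fin n) → S} (hw : TropPluckerRel n d w)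
    {I : Finset (Fin n)} (hI : I.card = d) (hd : 0 < d) (hwI : w I = 1) {s t : S}
    (h : ModCongr S (WedgeBendRel n d w) (s • deltaVec S n d I) (t • deltaVec S n d I)) :
    s = t := by
  simpa [pluckerPairing_deltaVec w hI, hwI] using h.pluckerPairing_eq hw hd

theorem exists_modCongr_smul {r : (WIdx n d → S) → (WIdx n d → S) → Prop} {g : WIdx n d → S}
    (h : ∀ K : WIdx n d, ModCongr S r (deltaVec S n d K.1) g ∨
      ModCongr S r (deltaVec S n d K.1) 0)
    (m : WIdx n d → S) : ∃ s : S, ModCongr S r m (s • g) := by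
  have hK : ∀ K, ∃ c : S, ModCongr S r (m K • deltaVec S n d K.1) (c • g) := fun K =>
    (h K).elim (fun hg => ⟨m K, hg.smul _⟩) fun h0 => ⟨0, by simpa using h0.smul (m K)⟩
  choose c hc using hK
  refine ⟨∑ K, c K, ?_⟩
  rw [eq_sum_smul_deltaVec m, sum_smul]
  exact ModCongr.sum _ fun K _ => hc K

/-- The relation of the circuit form of `J = B + i + k`, wedged with `x_B`, with `j = i`. -/
theorem modCongr_exchange (w : Finset (Fin n) → S) (hd : 0 < d) {B : Finset (Fin n)}
    (hB : B.card = d - 1) {i k : Fin n} (hi : i ∉ B) (hk : k ∉ B) (hik : i ≠ k) :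
    ModCongr S (WedgeBendRel n d w)
      (w (insert k B) • deltaVec S n d (insert i B) + w (insert i B) • deltaVec S n d (insert k B))
      (w (insert i B) • deltaVec S n d (insert k B)) := by
  have hJ : (insert i (insert k B)).card = d + 1 := by
    rw [card_insert_of_notMem (by simp [hik, hi]), card_insert_of_notMem hk]
    omega
  refine .of ⟨insert i (insert k B), B, i, mem_insert_self _ _, hJ, hB, ?_, ?_⟩
  · rw [wedgeElt_eq_sum, insert_sdiff_of_notMem _ hi, insert_sdiff_of_notMem _ hk, sdiff_self,
      bot_eq_empty, insert_empty, sum_insert (by simp [hik]), sum_singleton,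
      erase_insert (by simp [hik, hi]), erase_insert_of_ne hik, erase_insert hk]
  · rw [wedgeElt_eq_sum, erase_insert (by simp [hik, hi]), insert_sdiff_of_notMem _ hk,
      sdiff_self, bot_eq_empty, insert_empty, sum_singleton, erase_insert_of_ne hik,
      erase_insert hk]

variable (𝓑 : Finset (Finset (Fin n)))

/-- The Plücker vector of the matroid with set of bases `𝓑`. -/
def basisIndicator (S : Type*) [Semifield S] : Finset (Fin n) → S :=
  fun I => if I ∈ 𝓑 then 1 else 0

variable {𝓑}

theorem tropPluckerRel_basisIndicator (hid : ∀ s : S, s + s = s)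
    (hexch : ∀ A B : Finset (Fin n), A.card = d + 1 → B.card = d - 1 → ∀ p ∈ A \ B,
      A.erase p ∈ 𝓑 → insert p B ∈ 𝓑 → ∃ i ∈ (A \ B).erase p, A.erase i ∈ 𝓑 ∧ insert i B ∈ 𝓑) :
    TropPluckerRel n d (basisIndicator 𝓑 S) := by
  intro A B hA hB p hp
  simp only [basisIndicator, boole_mul, ← ite_and]
  refine sum_boole_eq_of_exists_iff hid
    ⟨fun ⟨i, hi, hiB⟩ => ?_, fun ⟨i, hi, hiB⟩ => ⟨i, mem_of_mem_erase hi, hiB⟩⟩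
  by_cases hip : i = p
  · subst hip
    exact hexch A B hA hB i hi hiB.1 hiB.2
  · exact ⟨i, mem_erase.2 ⟨hip, hi⟩, hiB⟩

theorem modCongr_deltaVec_of_exchange (hd : 0 < d) {B : Finset (Fin n)} (hB : B.card = d - 1)
    {i k : Fin n} (hi : i ∉ B) (hk : k ∉ B) (hik : i ≠ k) (hiB : insert i B ∈ 𝓑)
    (hkB : insert k B ∈ 𝓑) :
    ModCongr S (WedgeBendRel n d (basisIndicator 𝓑 S))
      (deltaVec S n d (insert i B)) (deltaVec S n d (insert k B)) := by
  have h₁ := modCongr_exchange (basisIndicator 𝓑 S) hd hB hi hk hik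
  have h₂ := modCongr_exchange (basisIndicator 𝓑 S) hd hB hk hi hik.symm
  simp only [basisIndicator, hiB, hkB, if_true, one_smul] at h₁ h₂
  rw [add_comm] at h₂
  exact h₂.symm.trans h₁

theorem modCongr_deltaVec_zero_of_notMem {I : Finset (Fin n)} (hI : I.card = d) (hI𝓑 : I ∉ 𝓑)
    {i k : Fin n} (hi : i ∈ I) (hk : k ∉ I) (hexch : insert k (I.erase i) ∈ 𝓑) :
    ModCongr S (WedgeBendRel n d (basisIndicator 𝓑 S)) (deltaVec S n d I) 0 := by
  have h := modCongr_exchange (S := S) (basisIndicator 𝓑 S) (hI ▸ card_pos.2 ⟨i, hi⟩)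
    (by rw [card_erase_of_mem hi, hI]) (notMem_erase i I) (fun h => hk (mem_of_mem_erase h))
    (fun h => hk (h ▸ hi))
  simpa [basisIndicator, insert_erase hi, hI𝓑, hexch] using h

theorem modCongr_deltaVec_of_mem (hcard : ∀ I ∈ 𝓑, I.card = d)
    (hexch : ∀ I ∈ 𝓑, ∀ I' ∈ 𝓑, ∀ e ∈ I \ I', ∃ f ∈ I' \ I, insert f (I.erase e) ∈ 𝓑)
    {I I' : Finset (Fin n)} (hI : I ∈ 𝓑) (hI' : I' ∈ 𝓑) :
    ModCongr S (WedgeBendRel n d (basisIndicator 𝓑 S)) (deltaVec S n d I) (deltaVec S n d I') := by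
  induction hk : (I \ I').card generalizing I with
  | zero =>
    rw [eq_of_subset_of_card_le (sdiff_eq_empty_iff_subset.1 (card_eq_zero.1 hk))
      ((hcard I' hI').trans (hcard I hI).symm).le]
    exact .refl _
  | succ k ih =>
    obtain ⟨e, he⟩ : (I \ I').Nonempty := card_pos.1 (by omega)
    obtain ⟨f, hf, hfI⟩ := hexch I hI I' hI' e he
    have heI := (mem_sdiff.1 he).1
    have hd : 0 < d := hcard I hI ▸ card_pos.2 ⟨e, heI⟩
    have hstep := modCongr_deltaVec_of_exchange (S := S) hd
      (by rw [card_erase_of_mem heI, hcard I hI]) (notMem_erase e I)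
      (fun h => (mem_sdiff.1 hf).2 (mem_of_mem_erase h))
      (fun h => (mem_sdiff.1 he).2 (h ▸ (mem_sdiff.1 hf).1))
      (by rwa [insert_erase heI]) hfI
    rw [insert_erase heI] at hstep
    refine hstep.trans (ih hfI ?_)
    rw [insert_sdiff_of_mem _ (mem_sdiff.1 hf).1, erase_sdiff_comm, card_erase_of_mem he, hk]
    rfl

end Wedge

/-- The circuit-hyperplanes `{1,2,3}, {1,4,5}, {2,5,6}, {3,4,6}` of `M(K_4)`, indexed from `0`. -/
def k4CircuitHyperplanes : Finset (Finset (Fin 6)) :=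
  {{0,1,2}, {0,3,4}, {1,4,5}, {2,3,5}}

def k4Bases : Finset (Finset (Fin 6)) := univ.powersetCard 3 \ k4CircuitHyperplanes

set_option maxRecDepth 2000 in
theorem k4Bases_exchange : ∀ I ∈ k4Bases, ∀ I' ∈ k4Bases, ∀ e ∈ I \ I',
    ∃ f ∈ I' \ I, insert f (I.erase e) ∈ k4Bases := by decide

theorem k4Bases_symmExchange : ∀ A ∈ univ.powersetCard 4, ∀ B ∈ univ.powersetCard 2,
    ∀ p ∈ A \ B, A.erase p ∈ k4Bases → insert p B ∈ k4Bases →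
      ∃ i ∈ (A \ B).erase p, A.erase i ∈ k4Bases ∧ insert i B ∈ k4Bases := by decide

theorem k4CircuitHyperplanes_exchange : ∀ I ∈ k4CircuitHyperplanes, ∃ i ∈ I, ∃ k ∈ univ \ I,
    insert k (I.erase i) ∈ k4Bases := by decide

theorem k4CircuitHyperplanes_subset : k4CircuitHyperplanes ⊆ univ.powersetCard 3 := by decide

theorem K4_top_wedge_free_rank_one_general {S : Type*} [Semifield S]
    (hid : ∀ s : S, s + s = s) :
    let bad : Finset (Finset (Fin 6)) :=
      {({0,1,2} : Finset (Fin 6)), {0,3,4}, {1,4,5}, {2,3,5}}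
    let 𝓑 : Finset (Finset (Fin 6)) := (univ : Finset (Fin 6)).powersetCard 3 \ bad
    let w : Finset (Fin 6) → S := fun I => if I ∈ 𝓑 then 1 else 0
    let g : WIdx 6 3 → S := deltaVec S 6 3 ({0,1,3} : Finset (Fin 6))
    (∀ m : WIdx 6 3 → S, ∃ s : S, ModCongr S (WedgeBendRel 6 3 w) m (s • g))
    ∧ (∀ s t : S, ModCongr S (WedgeBendRel 6 3 w) (s • g) (t • g) → s = t)
    ∧ (∀ I ∈ 𝓑, ModCongr S (WedgeBendRel 6 3 w) (deltaVec S 6 3 I) g)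
    ∧ (∀ I ∈ bad, ModCongr S (WedgeBendRel 6 3 w) (deltaVec S 6 3 I) 0) := by
  intro bad 𝓑 w g
  have hcard : ∀ I ∈ k4Bases, I.card = 3 := fun I hI => mem_powersetCard_univ.1 (mem_sdiff.1 hI).1
  have hw : TropPluckerRel 6 3 w := tropPluckerRel_basisIndicator hid fun A B hA hB =>
    k4Bases_symmExchange A (mem_powersetCard_univ.2 hA) B (mem_powersetCard_univ.2 hB)
  have hg : ({0,1,3} : Finset (Fin 6)) ∈ 𝓑 := by decide
  have hbases : ∀ I ∈ 𝓑, ModCongr S (WedgeBendRel 6 3 w) (deltaVec S 6 3 I) g :=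
    fun I hI => modCongr_deltaVec_of_mem hcard k4Bases_exchange hI hg
  have hbad : ∀ I ∈ bad, ModCongr S (WedgeBendRel 6 3 w) (deltaVec S 6 3 I) 0 := fun I hI => by
    obtain ⟨i, hi, k, hk, hexch⟩ := k4CircuitHyperplanes_exchange I hI
    exact modCongr_deltaVec_zero_of_notMem
      (mem_powersetCard_univ.1 (k4CircuitHyperplanes_subset hI)) (fun h => (mem_sdiff.1 h).2 hI)
      hi (mem_sdiff.1 hk).2 hexch
  refine ⟨exists_modCongr_smul fun K => ?_,
    fun s t => eq_of_modCongr_smul_deltaVec hw (by decide) (by decide) (if_pos hg), hbases, hbad⟩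
  by_cases hK : K.1 ∈ 𝓑
  · exact .inl (hbases K hK)
  · exact .inr (hbad K (by simpa [𝓑, K.2] using hK))

/-- over the Boolean semifield (an idempotent semifield whose only elements
are `0` and `1`), let `w ∈ ⋀^3 𝔹^6` be the Plücker vector of the graphic matroid
`M(K_4)`, whose bases `𝓑` are all 3-element subsets of `{1,…,6}` (here `Fin 6`) except
the four circuit-hyperplanes `{1,2,3},{1,4,5},{2,5,6},{3,4,6}` (zero-indexed:
`{0,1,2},{0,3,4},{1,4,5},{2,3,5}`).  Then `⋀^3 Q_w ≅ 𝔹` is free of rank one; the images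
of `x_I` for `I ∈ 𝓑` all equal the generator, and `x_I = 0` for the four excluded
triples. -/
theorem K4_top_wedge_free_rank_one {S : Type*} [Semifield S]
    (hid : ∀ s : S, s + s = s) (htwo : ∀ s : S, s = 0 ∨ s = 1) :
    let bad : Finset (Finset (Fin 6)) :=
      {({0,1,2} : Finset (Fin 6)), {0,3,4}, {1,4,5}, {2,3,5}}
    let 𝓑 : Finset (Finset (Fin 6)) := (univ : Finset (Fin 6)).powersetCard 3 \ bad
    let w : Finset (Fin 6) → S := fun I => if I ∈ 𝓑 then 1 else 0
    let g : WIdx 6 3 → S := deltaVec S 6 3 ({0,1,3} : Finset (Fin 6))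
    (∀ m : WIdx 6 3 → S, ∃ s : S, ModCongr S (WedgeBendRel 6 3 w) m (s • g))
    ∧ (∀ s t : S, ModCongr S (WedgeBendRel 6 3 w) (s • g) (t • g) → s = t)
    ∧ (∀ I ∈ 𝓑, ModCongr S (WedgeBendRel 6 3 w) (deltaVec S 6 3 I) g)
    ∧ (∀ I ∈ bad, ModCongr S (WedgeBendRel 6 3 w) (deltaVec S 6 3 I) 0) :=
  K4_top_wedge_free_rank_one_general hid
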